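/- arXiv:2510.13088 — 2 statements merged into one kernel-verified Lean document; each statement's English description precedes it below -/
import Mathlib

section
/- For any continuation (p1,p2R,p2A,t) with p1>0, the following hold: (1) every point in the support of p2R is at most t; (2) every point in the support of p2A is at least p1; (3) every point in the support of p2R is at most the monopoly price p*; (4) every point in the support of p2A is at least p*; (5) p1 ≤ t. Consequently the indifference equation can be rewritten as t - p1 + E[max(t-p2A,0)] = t - E[p2R]. -/
/-!
After an accept, the posterior revenue curve `R^A` is the identity below `min t p1`, so no
optimal accept price lies strictly below `min t p1`. If `t < p1`, every accept price is then at
least `t` and the indifference equation reads `t - p1 = E[max (t - p2R) 0] ≥ 0`; hence `p1 ≤ t`,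
and accept prices are at least `p1`. After a reject, `R^R` vanishes above `t` but is positive
on `(0, p1)`, so reject prices are at most `t`.

For the comparison with `p*`, write the revenue curves of the truncations via `R`:
`p ↦ min (R p / (1 - F x)) p` for `F_{≥x}`, strictly increasing where `R` is, and
`p ↦ max (R p - p (1 - F x)) 0 / F x` for `F_{≤x}`, nonincreasing where `R` is strictly
decreasing and strictly decreasing while positive. Strict concavity makes `R` strictly
increasing on `[0, p*]` and strictly decreasing on `[p*, 1]`, and both properties survive
mixing with weights in `[0, 1]`.
-/

open MeasureTheory Set Filter

noncomputable section

namespace RepeatedSales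

/-- `F` is the CDF of an atomless distribution fully supported on `[0,1]`:
continuous, strictly increasing on `[0,1]`, with `F 0 = 0` and `F 1 = 1`. -/
structure NiceCDF (F : ℝ → ℝ) : Prop where
  cont : Continuous F
  mono : StrictMonoOn F (Icc (0:ℝ) 1)
  zero : F 0 = 0
  one : F 1 = 1

/-- The (price-posting) revenue curve `R(p) = p (1 - F p)`. -/
def Rcurve (F : ℝ → ℝ) (p : ℝ) : ℝ := p * (1 - F p)

/-- The CDF truncated at `x` from above: `F_{≤x}(v) = min (F v / F x) 1`. -/
def Fle (F : ℝ → ℝ) (x v : ℝ) : ℝ := min (F v / F x) 1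

/-- The CDF truncated at `x` from below: `F_{≥x}(v) = max ((F v - F x)/(1 - F x)) 0`. -/
def Fge (F : ℝ → ℝ) (x v : ℝ) : ℝ := max ((F v - F x) / (1 - F x)) 0

/-- Revenue curve of the truncated distribution `F_{≤x}`. -/
def Rle (F : ℝ → ℝ) (x p : ℝ) : ℝ := p * (1 - Fle F x p)

/-- Revenue curve of the truncated distribution `F_{≥x}`. -/
def Rge (F : ℝ → ℝ) (x p : ℝ) : ℝ := p * (1 - Fge F x p)

/-- Posterior probability of sophistication after a reject. -/
def muR (F : ℝ → ℝ) (μ p1 t : ℝ) : ℝ := μ * F t / (μ * F t + (1 - μ) * F p1)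

/-- Posterior probability of sophistication after an accept. -/
def muA (F : ℝ → ℝ) (μ p1 t : ℝ) : ℝ :=
  μ * (1 - F t) / (μ * (1 - F t) + (1 - μ) * (1 - F p1))

/-- The seller's posterior CDF over values after a first-round reject. -/
def FrejCDF (F : ℝ → ℝ) (μ p1 t v : ℝ) : ℝ :=
  muR F μ p1 t * Fle F t v + (1 - muR F μ p1 t) * Fle F p1 v

/-- The seller's posterior CDF over values after a first-round accept. -/
def FaccCDF (F : ℝ → ℝ) (μ p1 t v : ℝ) : ℝ :=
  muA F μ p1 t * Fge F t v + (1 - muA F μ p1 t) * Fge F p1 v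

/-- The second-round revenue curve conditioned on a reject. -/
def Rrej (F : ℝ → ℝ) (μ p1 t p : ℝ) : ℝ := p * (1 - FrejCDF F μ p1 t p)

/-- The second-round revenue curve conditioned on an accept. -/
def Racc (F : ℝ → ℝ) (μ p1 t p : ℝ) : ℝ := p * (1 - FaccCDF F μ p1 t p)

/-- The (topological) support of a measure on `ℝ`: points all of whose
neighborhoods have positive measure. -/
def msupp (ν : Measure ℝ) : Set ℝ := {x | ∀ U ∈ nhds x, ν U ≠ 0}

/-- A continuation `(p1, p2R, p2A, t)` at sophistication level `μ`:
`p2R`, `p2A` are (random) prices, i.e. probability measures supported in `[0,1]`,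
every point of the support of `p2R` (resp. `p2A`) maximizes the reject (resp. accept)
revenue curve over `[0,1]`, and the threshold indifference equation holds.
The denominators defining the posteriors are assumed positive. -/
structure Continuation (F : ℝ → ℝ) (μ p1 : ℝ) (p2R p2A : Measure ℝ) (t : ℝ) : Prop where
  denR_pos : 0 < μ * F t + (1 - μ) * F p1
  denA_pos : 0 < μ * (1 - F t) + (1 - μ) * (1 - F p1)
  probR : IsProbabilityMeasure p2R
  probA : IsProbabilityMeasure p2A
  suppR01 : msupp p2R ⊆ Icc 0 1
  suppA01 : msupp p2A ⊆ Icc 0 1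
  optR : ∀ p ∈ msupp p2R, IsMaxOn (Rrej F μ p1 t) (Icc 0 1) p
  optA : ∀ p ∈ msupp p2A, IsMaxOn (Racc F μ p1 t) (Icc 0 1) p
  indiff : t - p1 + (∫ x, max (t - x) 0 ∂p2A) = ∫ x, max (t - x) 0 ∂p2R

/-- A continuation with deterministic accept price `p2A ≥ t`. -/
def SophFocused (p2A : Measure ℝ) (t : ℝ) : Prop :=
  ∃ a : ℝ, p2A = Measure.dirac a ∧ t ≤ a

/-- A continuation with deterministic accept price `p2A < t`. -/
def NaiveFocused (p2A : Measure ℝ) (t : ℝ) : Prop :=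
  ∃ a : ℝ, p2A = Measure.dirac a ∧ a < t

/-- The seller's expected revenue of a continuation at sophistication `μ`. -/
def sellerRev (F : ℝ → ℝ) (μ p1 t : ℝ) (p2R p2A : Measure ℝ) : ℝ :=
  μ * (p1 * (1 - F t) + (∫ a, (if a ≤ t then a * (1 - F a) else 0) ∂p2A)
      + ∫ r, r * (F t - F r) ∂p2R)
  + (1 - μ) * (p1 * (1 - F p1) + (∫ a, a * (1 - F a) ∂p2A)
      + ∫ r, (if r ≤ p1 then r * (F p1 - F r) else 0) ∂p2R)

section ConcaveMax

variable {𝕜 : Type*} [Field 𝕜] [LinearOrder 𝕜] [IsStrictOrderedRing 𝕜]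
  {s : Set 𝕜} {f : 𝕜 → 𝕜} {x p : 𝕜}

theorem _root_.StrictConcaveOn.lt_of_isMaxOn (hf : StrictConcaveOn 𝕜 s f) (hx : x ∈ s)
    (hmax : IsMaxOn f s x) (hp : p ∈ s) (hpx : p ≠ x) : f p < f x :=
  (hmax hp).lt_of_ne fun h => hpx <| hf.eq_of_isMaxOn
    (isMaxOn_iff.mpr fun y hy => (isMaxOn_iff.mp hmax y hy).trans h.ge) hmax hp hx

theorem _root_.StrictConcaveOn.strictMonoOn_of_isMaxOn (hf : StrictConcaveOn 𝕜 s f)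
    (hx : x ∈ s) (hmax : IsMaxOn f s x) : StrictMonoOn f (s ∩ Iic x) := by
  intro p hp q hq hpq
  rcases hq.2.eq_or_lt with rfl | hqx
  · exact hf.lt_of_isMaxOn hq.1 hmax hp.1 hpq.ne
  · have hpx := hpq.trans hqx
    have := hf.lt_on_openSegment hp.1 hx hpx.ne
      (by rw [openSegment_eq_Ioo hpx]; exact ⟨hpq, hqx⟩)
    rwa [min_eq_left (hmax hp.1)] at this

theorem _root_.StrictConcaveOn.strictAntiOn_of_isMaxOn (hf : StrictConcaveOn 𝕜 s f)
    (hx : x ∈ s) (hmax : IsMaxOn f s x) : StrictAntiOn f (s ∩ Ici x) := by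
  intro p hp q hq hpq
  rcases hp.2.eq_or_lt with rfl | hxp
  · exact hf.lt_of_isMaxOn hp.1 hmax hq.1 hpq.ne'
  · have hxq := hxp.trans hpq
    have := hf.lt_on_openSegment hq.1 hx hxq.ne'
      (by rw [openSegment_symm, openSegment_eq_Ioo hxq]; exact ⟨hxp, hpq⟩)
    rwa [min_eq_left (hmax hq.1)] at this

end ConcaveMax

theorem div_add_mem_Icc_zero_one {a b : ℝ} (ha : 0 ≤ a) (hb : 0 ≤ b) :
    a / (a + b) ∈ Icc (0:ℝ) 1 :=
  ⟨div_nonneg ha (add_nonneg ha hb),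
    div_le_one_of_le₀ (le_add_of_nonneg_right hb) (add_nonneg ha hb)⟩

theorem convex_comb_lt {w a a' b b' : ℝ} (hw : w ∈ Icc (0:ℝ) 1) (ha : a < a') (hb : b < b') :
    w * a + (1 - w) * b < w * a' + (1 - w) * b' := by
  rcases le_total (a' - a) (b' - b) with h | h
  · nlinarith [mul_nonneg (sub_nonneg.2 hw.2) (sub_nonneg.2 h)]
  · nlinarith [mul_nonneg hw.1 (sub_nonneg.2 h)]

theorem convex_comb_lt_of_pos {w a a' b b' : ℝ} (hw : w ∈ Icc (0:ℝ) 1) (ha : a ≤ a')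
    (hb : b ≤ b') (ha' : 0 < a → a < a') (hb' : 0 < b → b < b')
    (hpos : 0 < w * a + (1 - w) * b) : w * a + (1 - w) * b < w * a' + (1 - w) * b' := by
  have hwa : w * a ≤ w * a' := mul_le_mul_of_nonneg_left ha hw.1
  have hwb : (1 - w) * b ≤ (1 - w) * b' := mul_le_mul_of_nonneg_left hb (sub_nonneg.2 hw.2)
  rcases lt_or_ge 0 (w * a) with hwa0 | hwa0
  · have hw0 : 0 < w := hw.1.lt_of_ne (by rintro rfl; simp at hwa0)
    linarith [mul_lt_mul_of_pos_left (ha' (pos_of_mul_pos_right hwa0 hw.1)) hw0]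
  · have hwb0 : 0 < (1 - w) * b := by linarith
    have hw1 : 0 < 1 - w := (sub_nonneg.2 hw.2).lt_of_ne (by intro h; simp [← h] at hwb0)
    linarith [mul_lt_mul_of_pos_left (hb' (pos_of_mul_pos_right hwb0 hw1.le)) hw1]

theorem msupp_eq_support (ν : Measure ℝ) : msupp ν = ν.support := by
  ext x
  simp [msupp, Measure.mem_support_iff_forall, pos_iff_ne_zero]

theorem ae_of_forall_mem_msupp {ν : Measure ℝ} {P : ℝ → Prop} (h : ∀ x ∈ msupp ν, P x) :
    ∀ᵐ x ∂ν, P x := by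
  filter_upwards [Measure.support_mem_ae (μ := ν)] with x hx
  exact h x (by rwa [msupp_eq_support])

namespace NiceCDF

variable {F : ℝ → ℝ} {v : ℝ}

theorem nonneg (hF : NiceCDF F) (hv : v ∈ Icc (0:ℝ) 1) : 0 ≤ F v :=
  hF.zero ▸ hF.mono.monotoneOn (left_mem_Icc.2 zero_le_one) hv hv.1

theorem le_one (hF : NiceCDF F) (hv : v ∈ Icc (0:ℝ) 1) : F v ≤ 1 :=
  hF.one ▸ hF.mono.monotoneOn hv (right_mem_Icc.2 zero_le_one) hv.2

theorem pos (hF : NiceCDF F) (hv : v ∈ Ioc (0:ℝ) 1) : 0 < F v :=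
  hF.zero ▸ hF.mono (left_mem_Icc.2 zero_le_one) (Ioc_subset_Icc_self hv) hv.1

end NiceCDF

section TruncatedRevenue

variable {F : ℝ → ℝ} {x p : ℝ}

theorem rle_eq_max (hFx : 0 < F x) (hp : 0 ≤ p) :
    Rle F x p = max (Rcurve F p - p * (1 - F x)) 0 / F x := by
  unfold Rle Fle Rcurve
  rw [← max_sub_sub_left, sub_self, mul_max_of_nonneg _ _ hp, mul_zero,
    ← max_div_div_right hFx.le, zero_div]
  congr 1
  field_simp
  ring

theorem rle_eq_zero (hFx : 0 < F x) (h : F x ≤ F p) : Rle F x p = 0 := by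
  unfold Rle Fle
  rw [min_eq_right ((one_le_div hFx).2 h)]
  ring

theorem rle_pos (hp : 0 < p) (hFx : 0 < F x) (h : F p < F x) : 0 < Rle F x p :=
  mul_pos hp (sub_pos.2 (min_lt_of_left_lt ((div_lt_one hFx).2 h)))

theorem rge_eq_min (hFx : F x < 1) (hp : 0 ≤ p) :
    Rge F x p = min (Rcurve F p / (1 - F x)) p := by
  unfold Rge Fge Rcurve
  rw [← min_sub_sub_left, sub_zero, mul_min_of_nonneg _ _ hp, mul_one]
  have : 1 - F x ≠ 0 := (sub_pos.2 hFx).ne'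
  congr 1
  field_simp
  ring

-- `Fge F x` vanishes identically here because `_ / 0 = 0`.
theorem rge_of_eq_one (hFx : F x = 1) : Rge F x p = p := by
  simp [Rge, Fge, hFx]

theorem rge_eq_self (hFx : F x ≤ 1) (h : F p ≤ F x) : Rge F x p = p := by
  unfold Rge Fge
  rw [max_eq_right (div_nonpos_of_nonpos_of_nonneg (sub_nonpos.2 h) (sub_nonneg.2 hFx))]
  ring

variable {S : Set ℝ}

theorem rge_strictMonoOn (hS : S ⊆ Ici 0) (hR : StrictMonoOn (Rcurve F) S) (hFx : F x ≤ 1) :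
    StrictMonoOn (Rge F x) S := by
  intro p hp q hq hpq
  rcases hFx.eq_or_lt with h | h
  · simpa only [rge_of_eq_one h] using hpq
  · rw [rge_eq_min h (hS hp), rge_eq_min h (hS hq)]
    exact min_lt_min (div_lt_div_of_pos_right (hR hp hq hpq) (sub_pos.2 h)) hpq

theorem rle_antitoneOn (hS : S ⊆ Ici 0) (hR : StrictAntiOn (Rcurve F) S) (hFx0 : 0 < F x)
    (hFx1 : F x ≤ 1) : AntitoneOn (Rle F x) S := by
  intro p hp q hq hpq
  rw [rle_eq_max hFx0 (hS hp), rle_eq_max hFx0 (hS hq)]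
  have : Rcurve F q - q * (1 - F x) ≤ Rcurve F p - p * (1 - F x) := by
    linarith [hR.antitoneOn hp hq hpq, mul_le_mul_of_nonneg_right hpq (sub_nonneg.2 hFx1)]
  gcongr

theorem rle_lt_of_pos (hS : S ⊆ Ici 0) (hR : StrictAntiOn (Rcurve F) S) (hFx0 : 0 < F x)
    (hFx1 : F x ≤ 1) {q : ℝ} (hp : p ∈ S) (hq : q ∈ S) (hpq : p < q)
    (hpos : 0 < Rle F x q) :
    Rle F x q < Rle F x p := by
  rw [rle_eq_max hFx0 (hS hq)] at hpos
  rw [rle_eq_max hFx0 (hS hp), rle_eq_max hFx0 (hS hq)]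
  have hg : 0 < Rcurve F q - q * (1 - F x) := by
    by_contra! h
    rw [max_eq_right h, zero_div] at hpos
    exact hpos.false
  have hlt : Rcurve F q - q * (1 - F x) < Rcurve F p - p * (1 - F x) := by
    linarith [hR hp hq hpq, mul_le_mul_of_nonneg_right hpq.le (sub_nonneg.2 hFx1)]
  rw [max_eq_left hg.le]
  exact div_lt_div_of_pos_right (hlt.trans_le (le_max_left _ _)) hFx0

end TruncatedRevenue

section Posterior

variable {F : ℝ → ℝ} {μ p1 t : ℝ}

theorem rrej_eq (p : ℝ) :
    Rrej F μ p1 t p = muR F μ p1 t * Rle F t p + (1 - muR F μ p1 t) * Rle F p1 p := by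
  unfold Rrej FrejCDF Rle
  ring

theorem racc_eq (p : ℝ) :
    Racc F μ p1 t p = muA F μ p1 t * Rge F t p + (1 - muA F μ p1 t) * Rge F p1 p := by
  unfold Racc FaccCDF Rge
  ring

theorem muR_mem_Icc (hF : NiceCDF F) (hμ : μ ∈ Icc (0:ℝ) 1) (hp1 : p1 ∈ Icc (0:ℝ) 1)
    (ht : t ∈ Icc (0:ℝ) 1) : muR F μ p1 t ∈ Icc (0:ℝ) 1 :=
  div_add_mem_Icc_zero_one (mul_nonneg hμ.1 (hF.nonneg ht))
    (mul_nonneg (sub_nonneg.2 hμ.2) (hF.nonneg hp1))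

theorem muA_mem_Icc (hF : NiceCDF F) (hμ : μ ∈ Icc (0:ℝ) 1) (hp1 : p1 ∈ Icc (0:ℝ) 1)
    (ht : t ∈ Icc (0:ℝ) 1) : muA F μ p1 t ∈ Icc (0:ℝ) 1 :=
  div_add_mem_Icc_zero_one (mul_nonneg hμ.1 (sub_nonneg.2 (hF.le_one ht)))
    (mul_nonneg (sub_nonneg.2 hμ.2) (sub_nonneg.2 (hF.le_one hp1)))

theorem racc_eq_self (hF : NiceCDF F) (hp1 : p1 ∈ Icc (0:ℝ) 1) (ht : t ∈ Icc (0:ℝ) 1)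
    {v : ℝ} (hv : v ∈ Icc (0:ℝ) 1) (hvt : v ≤ t) (hvp1 : v ≤ p1) :
    Racc F μ p1 t v = v := by
  rw [racc_eq, rge_eq_self (hF.le_one ht) (hF.mono.monotoneOn hv ht hvt),
    rge_eq_self (hF.le_one hp1) (hF.mono.monotoneOn hv hp1 hvp1)]
  ring

end Posterior

namespace Continuation

variable {F : ℝ → ℝ} {μ p1 t : ℝ} {p2R p2A : Measure ℝ}

theorem le_of_mem_msupp_acc (hc : Continuation F μ p1 p2R p2A t) (hF : NiceCDF F)
    (hp1 : p1 ∈ Icc (0:ℝ) 1) (ht : t ∈ Icc (0:ℝ) 1) {a v : ℝ} (ha : a ∈ msupp p2A)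
    (hv : v ∈ Icc (0:ℝ) 1) (hvt : v ≤ t) (hvp1 : v ≤ p1) : v ≤ a := by
  by_contra! hav
  have : Racc F μ p1 t v ≤ Racc F μ p1 t a := hc.optA a ha hv
  rw [racc_eq_self hF hp1 ht hv hvt hvp1,
    racc_eq_self hF hp1 ht (hc.suppA01 ha) (hav.le.trans hvt) (hav.le.trans hvp1)] at this
  linarith

theorem p1_le_t (hc : Continuation F μ p1 p2R p2A t) (hF : NiceCDF F)
    (hp1 : p1 ∈ Icc (0:ℝ) 1) (ht : t ∈ Icc (0:ℝ) 1) : p1 ≤ t := by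
  by_contra! htp1
  have hA : ∀ᵐ a ∂p2A, max (t - a) 0 = 0 := ae_of_forall_mem_msupp fun a ha =>
    max_eq_right (sub_nonpos.2 (hc.le_of_mem_msupp_acc hF hp1 ht ha ht le_rfl htp1.le))
  have hR : 0 ≤ ∫ r, max (t - r) 0 ∂p2R := integral_nonneg fun r => le_max_right _ _
  have := hc.indiff
  rw [integral_eq_zero_of_ae hA] at this
  linarith

theorem p1_le_of_mem_msupp_acc (hc : Continuation F μ p1 p2R p2A t) (hF : NiceCDF F)
    (hp1 : p1 ∈ Icc (0:ℝ) 1) (ht : t ∈ Icc (0:ℝ) 1) {a : ℝ} (ha : a ∈ msupp p2A) :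
    p1 ≤ a :=
  hc.le_of_mem_msupp_acc hF hp1 ht ha hp1 (hc.p1_le_t hF hp1 ht) le_rfl

theorem rrej_pos_of_mem_msupp (hc : Continuation F μ p1 p2R p2A t) (hF : NiceCDF F)
    (hμ : μ ∈ Icc (0:ℝ) 1) (hp1 : p1 ∈ Ioc (0:ℝ) 1) (ht : t ∈ Icc (0:ℝ) 1) {r : ℝ}
    (hr : r ∈ msupp p2R) : 0 < Rrej F μ p1 t r := by
  have hp1' := Ioc_subset_Icc_self hp1
  have hp1t := hc.p1_le_t hF hp1' ht
  have hhalf : p1 / 2 ∈ Icc (0:ℝ) 1 := ⟨by linarith [hp1.1], by linarith [hp1.2]⟩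
  have hFhalf : F (p1 / 2) < F p1 := hF.mono hhalf hp1' (by linarith [hp1.1])
  have hFp1t : F p1 ≤ F t := hF.mono.monotoneOn hp1' ht hp1t
  have hFp1 := hF.pos hp1
  refine lt_of_lt_of_le ?_ (hc.optR r hr hhalf)
  have := convex_comb_lt (muR_mem_Icc hF hμ hp1' ht)
    (rle_pos (half_pos hp1.1) (hFp1.trans_le hFp1t) (hFhalf.trans_le hFp1t))
    (rle_pos (half_pos hp1.1) hFp1 hFhalf)
  rw [rrej_eq]
  simpa using this

theorem le_t_of_mem_msupp_rej (hc : Continuation F μ p1 p2R p2A t) (hF : NiceCDF F)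
    (hμ : μ ∈ Icc (0:ℝ) 1) (hp1 : p1 ∈ Ioc (0:ℝ) 1) (ht : t ∈ Icc (0:ℝ) 1) {r : ℝ}
    (hr : r ∈ msupp p2R) : r ≤ t := by
  by_contra! htr
  have hrI := hc.suppR01 hr
  have hp1t := hc.p1_le_t hF (Ioc_subset_Icc_self hp1) ht
  have hFtr : F t ≤ F r := hF.mono.monotoneOn ht hrI htr.le
  have hFp1t : F p1 ≤ F t := hF.mono.monotoneOn (Ioc_subset_Icc_self hp1) ht hp1t
  have hFp1 := hF.pos hp1
  have := hc.rrej_pos_of_mem_msupp hF hμ hp1 ht hr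
  rw [rrej_eq, rle_eq_zero (hFp1.trans_le hFp1t) hFtr, rle_eq_zero hFp1 (hFp1t.trans hFtr)]
    at this
  simp at this

theorem le_pstar_of_mem_msupp_rej (hc : Continuation F μ p1 p2R p2A t) (hF : NiceCDF F)
    (hμ : μ ∈ Icc (0:ℝ) 1) (hp1 : p1 ∈ Ioc (0:ℝ) 1) (ht : t ∈ Icc (0:ℝ) 1)
    {pstar : ℝ} (hcon : StrictConcaveOn ℝ (Icc (0:ℝ) 1) (Rcurve F))
    (hps_mem : pstar ∈ Icc (0:ℝ) 1) (hps_max : IsMaxOn (Rcurve F) (Icc (0:ℝ) 1) pstar)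
    {r : ℝ} (hr : r ∈ msupp p2R) :
    r ≤ pstar := by
  by_contra! hpr
  have hp1' := Ioc_subset_Icc_self hp1
  have hS : Icc (0:ℝ) 1 ∩ Ici pstar ⊆ Ici 0 := fun p hp => hp.1.1
  have hR := hcon.strictAntiOn_of_isMaxOn hps_mem hps_max
  have hps : pstar ∈ Icc (0:ℝ) 1 ∩ Ici pstar := ⟨hps_mem, le_refl pstar⟩
  have hrS : r ∈ Icc (0:ℝ) 1 ∩ Ici pstar := ⟨hc.suppR01 hr, hpr.le⟩
  have hFp1 := hF.pos hp1
  have hFt : 0 < F t := hFp1.trans_le (hF.mono.monotoneOn hp1' ht (hc.p1_le_t hF hp1' ht))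
  have hpos := hc.rrej_pos_of_mem_msupp hF hμ hp1 ht hr
  rw [rrej_eq] at hpos
  have hlt := convex_comb_lt_of_pos (muR_mem_Icc hF hμ hp1' ht)
    (rle_antitoneOn hS hR hFt (hF.le_one ht) hps hrS hpr.le)
    (rle_antitoneOn hS hR hFp1 (hF.le_one hp1') hps hrS hpr.le)
    (rle_lt_of_pos hS hR hFt (hF.le_one ht) hps hrS hpr)
    (rle_lt_of_pos hS hR hFp1 (hF.le_one hp1') hps hrS hpr) hpos
  rw [← rrej_eq, ← rrej_eq] at hlt
  exact (hc.optR r hr hps_mem).not_gt hlt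

theorem pstar_le_of_mem_msupp_acc (hc : Continuation F μ p1 p2R p2A t) (hF : NiceCDF F)
    (hμ : μ ∈ Icc (0:ℝ) 1) (hp1 : p1 ∈ Icc (0:ℝ) 1) (ht : t ∈ Icc (0:ℝ) 1)
    {pstar : ℝ} (hcon : StrictConcaveOn ℝ (Icc (0:ℝ) 1) (Rcurve F))
    (hps_mem : pstar ∈ Icc (0:ℝ) 1) (hps_max : IsMaxOn (Rcurve F) (Icc (0:ℝ) 1) pstar)
    {a : ℝ} (ha : a ∈ msupp p2A) :
    pstar ≤ a := by
  by_contra! hap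
  have hS : Icc (0:ℝ) 1 ∩ Iic pstar ⊆ Ici 0 := fun p hp => hp.1.1
  have hR := hcon.strictMonoOn_of_isMaxOn hps_mem hps_max
  have hps : pstar ∈ Icc (0:ℝ) 1 ∩ Iic pstar := ⟨hps_mem, le_refl pstar⟩
  have haS : a ∈ Icc (0:ℝ) 1 ∩ Iic pstar := ⟨hc.suppA01 ha, hap.le⟩
  have hlt := convex_comb_lt (muA_mem_Icc hF hμ hp1 ht)
    (rge_strictMonoOn hS hR (hF.le_one ht) haS hps hap)
    (rge_strictMonoOn hS hR (hF.le_one hp1) haS hps hap)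
  rw [← racc_eq, ← racc_eq] at hlt
  exact (hc.optA a ha hps_mem).not_gt hlt

theorem integral_max_sub_rej (hc : Continuation F μ p1 p2R p2A t)
    (h : ∀ r ∈ msupp p2R, r ≤ t) : ∫ r, max (t - r) 0 ∂p2R = t - ∫ r, r ∂p2R := by
  have := hc.probR
  have hint : Integrable (fun r : ℝ => r) p2R :=
    Integrable.mono' (integrable_const 1) measurable_id.aestronglyMeasurable
      (ae_of_forall_mem_msupp fun r hr =>
        abs_le.2 ⟨by linarith [(hc.suppR01 hr).1], (hc.suppR01 hr).2⟩)
  have hmax : ∀ᵐ r ∂p2R, max (t - r) 0 = t - r :=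
    ae_of_forall_mem_msupp fun r hr => max_eq_left (sub_nonneg.2 (h r hr))
  rw [integral_congr_ae hmax, integral_sub (integrable_const t) hint, integral_const]
  simp

end Continuation

theorem continuation_price_ordering_general
    (F : ℝ → ℝ) (hF : NiceCDF F)
    (hcon : StrictConcaveOn ℝ (Icc (0:ℝ) 1) (Rcurve F))
    (pstar : ℝ) (hps_mem : pstar ∈ Icc (0:ℝ) 1)
    (hps_max : IsMaxOn (Rcurve F) (Icc (0:ℝ) 1) pstar)
    (μ p1 t : ℝ) (p2R p2A : Measure ℝ)
    (hμ : μ ∈ Icc (0:ℝ) 1) (hp1 : p1 ∈ Ioc (0:ℝ) 1) (ht : t ∈ Icc (0:ℝ) 1)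
    (hc : Continuation F μ p1 p2R p2A t) :
    (∀ p ∈ msupp p2R, p ≤ t) ∧
    (∀ p ∈ msupp p2A, p1 ≤ p) ∧
    (∀ p ∈ msupp p2R, p ≤ pstar) ∧
    (∀ p ∈ msupp p2A, pstar ≤ p) ∧
    p1 ≤ t ∧
    (t - p1 + (∫ a, max (t - a) 0 ∂p2A) = t - ∫ r, r ∂p2R) := by
  have hp1' := Ioc_subset_Icc_self hp1
  have hrej_le_t : ∀ r ∈ msupp p2R, r ≤ t := fun r hr =>
    hc.le_t_of_mem_msupp_rej hF hμ hp1 ht hr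
  refine ⟨hrej_le_t, fun a ha => hc.p1_le_of_mem_msupp_acc hF hp1' ht ha,
    fun r hr => hc.le_pstar_of_mem_msupp_rej hF hμ hp1 ht hcon hps_mem hps_max hr,
    fun a ha => hc.pstar_le_of_mem_msupp_acc hF hμ hp1' ht hcon hps_mem hps_max ha,
    hc.p1_le_t hF hp1' ht, ?_⟩
  rw [hc.indiff, hc.integral_max_sub_rej hrej_le_t]

/-- **Lemma: price ordering.** For any continuation `(p1,p2R,p2A,t)`
with `p1 > 0`: (1) every support point of `p2R` is at most `t`; (2) every support
point of `p2A` is at least `p1`; (3) every support point of `p2R` is at most the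
monopoly price `p*`; (4) every support point of `p2A` is at least `p*`; (5) `p1 ≤ t`;
and consequently the indifference equation can be rewritten as
`t - p1 + E[max (t - p2A) 0] = t - E[p2R]`. -/
theorem continuation_price_ordering
    (F : ℝ → ℝ) (hF : NiceCDF F)
    (hcon : StrictConcaveOn ℝ (Icc (0:ℝ) 1) (Rcurve F))
    (pstar : ℝ) (hps_mem : pstar ∈ Icc (0:ℝ) 1)
    (hps_max : IsMaxOn (Rcurve F) (Icc (0:ℝ) 1) pstar)
    (hps_uniq : ∀ q ∈ Icc (0:ℝ) 1, IsMaxOn (Rcurve F) (Icc (0:ℝ) 1) q → q = pstar)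
    (μ p1 t : ℝ) (p2R p2A : Measure ℝ)
    (hμ : μ ∈ Icc (0:ℝ) 1) (hp1 : p1 ∈ Ioc (0:ℝ) 1) (ht : t ∈ Icc (0:ℝ) 1)
    (hc : Continuation F μ p1 p2R p2A t) :
    (∀ p ∈ msupp p2R, p ≤ t) ∧
    (∀ p ∈ msupp p2A, p1 ≤ p) ∧
    (∀ p ∈ msupp p2R, p ≤ pstar) ∧
    (∀ p ∈ msupp p2A, pstar ≤ p) ∧
    p1 ≤ t ∧
    (t - p1 + (∫ a, max (t - a) 0 ∂p2A) = t - ∫ r, r ∂p2R) :=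
  continuation_price_ordering_general F hF hcon pstar hps_mem hps_max μ p1 t p2R p2A hμ hp1 ht hc

end RepeatedSales
end
end

section
/- For any continuation (p1,p2R,p2A,t), the accept price p2A is deterministic (the measure p2A is a point mass). If the continuation is sophisticated-focused, then p2A = max(t, p*), where p* is the unique maximizer of R on [0,1]. -/
open MeasureTheory Set Filter

noncomputable section

namespace RepeatedSales

lemma F_nonneg {F : ℝ → ℝ} (hF : NiceCDF F) {x : ℝ} (hx : x ∈ Icc (0:ℝ) 1) : 0 ≤ F x := by
  rcases eq_or_lt_of_le hx.1 with h | h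
  · rw [← h, hF.zero]
  · rw [← hF.zero]
    exact (hF.mono (left_mem_Icc.2 zero_le_one) hx h).le

lemma F_le_one {F : ℝ → ℝ} (hF : NiceCDF F) {x : ℝ} (hx : x ∈ Icc (0:ℝ) 1) : F x ≤ 1 := by
  rcases eq_or_lt_of_le hx.2 with h | h
  · rw [h, hF.one]
  · rw [← hF.one]
    exact (hF.mono hx (right_mem_Icc.2 zero_le_one) h).le

lemma R_lt_of_lt {F : ℝ → ℝ}
    (hcon : StrictConcaveOn ℝ (Icc (0:ℝ) 1) (Rcurve F))
    {pstar : ℝ} (hps_mem : pstar ∈ Icc (0:ℝ) 1)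
    (hps_max : IsMaxOn (Rcurve F) (Icc (0:ℝ) 1) pstar)
    (hps_uniq : ∀ q ∈ Icc (0:ℝ) 1, IsMaxOn (Rcurve F) (Icc (0:ℝ) 1) q → q = pstar)
    {a b : ℝ} (ha : 0 ≤ a) (hab : a < b) (hb : b ≤ pstar) :
    Rcurve F a < Rcurve F b := by
  have haI : a ∈ Icc (0:ℝ) 1 := ⟨ha, le_trans (le_trans hab.le hb) hps_mem.2⟩
  have hbI : b ∈ Icc (0:ℝ) 1 := ⟨le_trans ha hab.le, le_trans hb hps_mem.2⟩
  have hRa : Rcurve F a ≤ Rcurve F pstar := isMaxOn_iff.1 hps_max a haI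
  rcases eq_or_lt_of_le hb with h | h
  · subst h
    by_contra hcontra
    push_neg at hcontra
    have heq : Rcurve F a = Rcurve F b := le_antisymm hRa hcontra
    have : a = b := by
      refine hps_uniq a haI ?_
      intro x hx
      calc Rcurve F x ≤ Rcurve F b := isMaxOn_iff.1 hps_max x hx
        _ = Rcurve F a := heq.symm
    exact absurd this hab.ne
  · set θ : ℝ := (pstar - b) / (pstar - a) with hθ
    have hpa : (0:ℝ) < pstar - a := by linarith
    have hθ0 : 0 < θ := div_pos (by linarith) hpa
    have hθ1 : θ < 1 := by
      rw [hθ, div_lt_one hpa]; linarith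
    have key : θ * (pstar - a) = pstar - b := div_mul_cancel₀ _ hpa.ne'
    have hcomb : θ • a + (1 - θ) • pstar = b := by
      simp only [smul_eq_mul]
      linear_combination -key
    have hne : a ≠ pstar := by linarith
    have h2 : (0:ℝ) < 1 - θ := by linarith
    have h3 : θ + (1 - θ) = 1 := by ring
    have := hcon.2 haI hps_mem hne hθ0 h2 h3
    rw [hcomb] at this
    simp only [smul_eq_mul] at this
    nlinarith

lemma R_lt_of_gt {F : ℝ → ℝ}
    (hcon : StrictConcaveOn ℝ (Icc (0:ℝ) 1) (Rcurve F))
    {pstar : ℝ} (hps_mem : pstar ∈ Icc (0:ℝ) 1)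
    (hps_max : IsMaxOn (Rcurve F) (Icc (0:ℝ) 1) pstar)
    (hps_uniq : ∀ q ∈ Icc (0:ℝ) 1, IsMaxOn (Rcurve F) (Icc (0:ℝ) 1) q → q = pstar)
    {a b : ℝ} (ha : pstar ≤ a) (hab : a < b) (hb : b ≤ 1) :
    Rcurve F b < Rcurve F a := by
  have haI : a ∈ Icc (0:ℝ) 1 := ⟨le_trans hps_mem.1 ha, le_trans hab.le hb⟩
  have hbI : b ∈ Icc (0:ℝ) 1 := ⟨le_trans haI.1 hab.le, hb⟩
  have hRb : Rcurve F b ≤ Rcurve F pstar := isMaxOn_iff.1 hps_max b hbI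
  rcases eq_or_lt_of_le ha with h | h
  · rw [← h]
    by_contra hcontra
    push_neg at hcontra
    have heq : Rcurve F b = Rcurve F pstar := le_antisymm hRb hcontra
    have : b = pstar := by
      refine hps_uniq b hbI ?_
      intro x hx
      calc Rcurve F x ≤ Rcurve F pstar := isMaxOn_iff.1 hps_max x hx
        _ = Rcurve F b := heq.symm
    rw [← h] at hab; exact absurd this (by linarith)
  · set θ : ℝ := (a - pstar) / (b - pstar) with hθ
    have hpb : (0:ℝ) < b - pstar := by linarith
    have hθ0 : 0 < θ := div_pos (by linarith) hpb
    have hθ1 : θ < 1 := by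
      rw [hθ, div_lt_one hpb]; linarith
    have key : θ * (b - pstar) = a - pstar := div_mul_cancel₀ _ hpb.ne'
    have hcomb : θ • b + (1 - θ) • pstar = a := by
      simp only [smul_eq_mul]
      linear_combination key
    have hne : b ≠ pstar := by linarith
    have h2 : (0:ℝ) < 1 - θ := by linarith
    have h3 : θ + (1 - θ) = 1 := by ring
    have := hcon.2 hbI hps_mem hne hθ0 h2 h3
    rw [hcomb] at this
    simp only [smul_eq_mul] at this
    nlinarith

def haux (F : ℝ → ℝ) (x p : ℝ) : ℝ := min p (Rcurve F p / (1 - F x))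

lemma haux_eq_Rge {F : ℝ → ℝ} (hF : NiceCDF F) {x : ℝ} (hx : x ∈ Icc (0:ℝ) 1)
    (hx1 : F x < 1) {p : ℝ} (hp : 0 ≤ p) :
    p * (1 - Fge F x p) = haux F x p := by
  have h1 : (0:ℝ) < 1 - F x := by linarith
  rcases le_total (F p) (F x) with hle | hle
  · have hmax : max ((F p - F x) / (1 - F x)) 0 = 0 :=
      max_eq_right (div_nonpos_iff.2 (Or.inr ⟨by linarith, by linarith⟩))
    have hmin : min p (Rcurve F p / (1 - F x)) = p := by
      refine min_eq_left ?_
      rw [le_div_iff₀ h1, Rcurve]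
      have : p * (1 - F x) ≤ p * (1 - F p) :=
        mul_le_mul_of_nonneg_left (by linarith) hp
      linarith
    rw [Fge, hmax, haux, hmin]; ring
  · have hmax : max ((F p - F x) / (1 - F x)) 0 = (F p - F x) / (1 - F x) :=
      max_eq_left (div_nonneg (by linarith) h1.le)
    have hmin : min p (Rcurve F p / (1 - F x)) = Rcurve F p / (1 - F x) := by
      refine min_eq_right ?_
      rw [div_le_iff₀ h1, Rcurve]
      have : p * (1 - F p) ≤ p * (1 - F x) :=
        mul_le_mul_of_nonneg_left (by linarith) hp
      linarith
    rw [Fge, hmax, haux, hmin, Rcurve]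
    field_simp
    try ring

lemma haux_eq_id {F : ℝ → ℝ} (hF : NiceCDF F) {x : ℝ} (hx : x ∈ Icc (0:ℝ) 1)
    (hx1 : F x < 1) {p : ℝ} (hp0 : 0 ≤ p) (hpx : p ≤ x) : haux F x p = p := by
  have h1 : (0:ℝ) < 1 - F x := by linarith
  have hpI : p ∈ Icc (0:ℝ) 1 := ⟨hp0, le_trans hpx hx.2⟩
  have hFp : F p ≤ F x := by
    rcases eq_or_lt_of_le hpx with h | h
    · rw [h]
    · exact (hF.mono hpI hx h).le
  refine min_eq_left ?_
  rw [le_div_iff₀ h1, Rcurve]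
  have : p * (1 - F x) ≤ p * (1 - F p) := mul_le_mul_of_nonneg_left (by linarith) hp0
  linarith

lemma haux_eq_R {F : ℝ → ℝ} (hF : NiceCDF F) {x : ℝ} (hx : x ∈ Icc (0:ℝ) 1)
    (hx1 : F x < 1) {p : ℝ} (hxp : x ≤ p) (hp1 : p ≤ 1) :
    haux F x p = Rcurve F p / (1 - F x) := by
  have h1 : (0:ℝ) < 1 - F x := by linarith
  have hpI : p ∈ Icc (0:ℝ) 1 := ⟨le_trans hx.1 hxp, hp1⟩
  have hFp : F x ≤ F p := by
    rcases eq_or_lt_of_le hxp with h | h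
    · rw [h]
    · exact (hF.mono hx hpI h).le
  refine min_eq_right ?_
  rw [div_le_iff₀ h1, Rcurve]
  have : p * (1 - F p) ≤ p * (1 - F x) := mul_le_mul_of_nonneg_left (by linarith) hpI.1
  linarith

lemma haux_strictMonoOn {F : ℝ → ℝ} (hF : NiceCDF F)
    (hcon : StrictConcaveOn ℝ (Icc (0:ℝ) 1) (Rcurve F))
    {pstar : ℝ} (hps_mem : pstar ∈ Icc (0:ℝ) 1)
    (hps_max : IsMaxOn (Rcurve F) (Icc (0:ℝ) 1) pstar)
    (hps_uniq : ∀ q ∈ Icc (0:ℝ) 1, IsMaxOn (Rcurve F) (Icc (0:ℝ) 1) q → q = pstar)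
    {x : ℝ} (hx : x ∈ Icc (0:ℝ) 1) (hx1 : F x < 1) :
    StrictMonoOn (haux F x) (Icc 0 (max x pstar)) := by
  have h1 : (0:ℝ) < 1 - F x := by linarith
  intro a ha b hb hab
  rcases le_or_gt b x with hbx | hbx
  · rw [haux_eq_id hF hx hx1 ha.1 (le_trans hab.le hbx),
      haux_eq_id hF hx hx1 (le_trans ha.1 hab.le) hbx]
    exact hab
  · have hbps : b ≤ pstar := by
      by_contra hcon2
      push_neg at hcon2
      exact absurd hb.2 (not_le.2 (max_lt hbx hcon2))
    have hRab : Rcurve F a < Rcurve F b :=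
      R_lt_of_lt hcon hps_mem hps_max hps_uniq ha.1 hab hbps
    rw [haux]
    refine lt_min (lt_of_le_of_lt (min_le_left _ _) hab) ?_
    refine lt_of_le_of_lt (min_le_right _ _) ?_
    exact (div_lt_div_iff_of_pos_right h1).2 hRab

lemma haux_strictAntiOn {F : ℝ → ℝ} (hF : NiceCDF F)
    (hcon : StrictConcaveOn ℝ (Icc (0:ℝ) 1) (Rcurve F))
    {pstar : ℝ} (hps_mem : pstar ∈ Icc (0:ℝ) 1)
    (hps_max : IsMaxOn (Rcurve F) (Icc (0:ℝ) 1) pstar)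
    (hps_uniq : ∀ q ∈ Icc (0:ℝ) 1, IsMaxOn (Rcurve F) (Icc (0:ℝ) 1) q → q = pstar)
    {x : ℝ} (hx : x ∈ Icc (0:ℝ) 1) (hx1 : F x < 1) :
    StrictAntiOn (haux F x) (Icc (max x pstar) 1) := by
  have h1 : (0:ℝ) < 1 - F x := by linarith
  intro a ha b hb hab
  rw [haux_eq_R hF hx hx1 (le_trans (le_max_left _ _) ha.1) (le_trans hab.le hb.2),
    haux_eq_R hF hx hx1 (le_trans (le_max_left _ _) (le_trans ha.1 hab.le)) hb.2]
  have hRba : Rcurve F b < Rcurve F a :=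
    R_lt_of_gt hcon hps_mem hps_max hps_uniq (le_trans (le_max_right _ _) ha.1) hab hb.2
  exact (div_lt_div_iff_of_pos_right h1).2 hRba

lemma strictConcaveOn_const_mul {s : Set ℝ} {f : ℝ → ℝ} (hf : StrictConcaveOn ℝ s f)
    {c : ℝ} (hc : 0 < c) : StrictConcaveOn ℝ s (fun p => c * f p) := by
  refine ⟨hf.1, fun x hx y hy hxy a b ha hb hab => ?_⟩
  have := hf.2 hx hy hxy ha hb hab
  simp only [smul_eq_mul] at this ⊢
  nlinarith

lemma concaveOn_const_mul {s : Set ℝ} {f : ℝ → ℝ} (hf : ConcaveOn ℝ s f)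
    {c : ℝ} (hc : 0 ≤ c) : ConcaveOn ℝ s (fun p => c * f p) := by
  simpa [smul_eq_mul] using hf.smul hc

lemma strictConcaveOn_congr {s : Set ℝ} {f g : ℝ → ℝ} (h : StrictConcaveOn ℝ s f)
    (he : EqOn f g s) : StrictConcaveOn ℝ s g := by
  refine ⟨h.1, fun x hx y hy hxy a b ha hb hab => ?_⟩
  have hmem : a • x + b • y ∈ s := h.1 hx hy ha.le hb.le hab
  rw [← he hx, ← he hy, ← he hmem]
  exact h.2 hx hy hxy ha hb hab

lemma haux_concaveOn {F : ℝ → ℝ} (hF : NiceCDF F)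
    (hcon : StrictConcaveOn ℝ (Icc (0:ℝ) 1) (Rcurve F))
    {x : ℝ} (hx1 : F x < 1) :
    ConcaveOn ℝ (Icc (0:ℝ) 1) (haux F x) := by
  have h1 : (0:ℝ) < 1 - F x := by linarith
  have hid : ConcaveOn ℝ (Icc (0:ℝ) 1) (fun p : ℝ => p) := by
    refine ⟨convex_Icc _ _, fun a ha b hb p q hp hq hpq => ?_⟩
    simp
  have hR : ConcaveOn ℝ (Icc (0:ℝ) 1) (fun p => (1 - F x)⁻¹ * Rcurve F p) :=
    concaveOn_const_mul hcon.concaveOn (inv_nonneg.2 h1.le)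
  have := hid.inf hR
  have heq : ((fun p : ℝ => p) ⊓ fun p => (1 - F x)⁻¹ * Rcurve F p) = haux F x := by
    funext p
    simp [Pi.inf_apply, haux, div_eq_inv_mul]
  rwa [heq] at this

lemma haux_strictConcaveOn {F : ℝ → ℝ} (hF : NiceCDF F)
    (hcon : StrictConcaveOn ℝ (Icc (0:ℝ) 1) (Rcurve F))
    {x : ℝ} (hx : x ∈ Icc (0:ℝ) 1) (hx1 : F x < 1) :
    StrictConcaveOn ℝ (Icc x 1) (haux F x) := by
  have h1 : (0:ℝ) < 1 - F x := by linarith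
  have hsub : Icc x 1 ⊆ Icc (0:ℝ) 1 := Icc_subset_Icc hx.1 le_rfl
  have hR : StrictConcaveOn ℝ (Icc x 1) (fun p => (1 - F x)⁻¹ * Rcurve F p) :=
    strictConcaveOn_const_mul (hcon.subset hsub (convex_Icc _ _)) (inv_pos.2 h1)
  refine strictConcaveOn_congr hR fun p hp => ?_
  rw [haux_eq_R hF hx hx1 hp.1 hp.2, div_eq_inv_mul]

lemma haux_continuous {F : ℝ → ℝ} (hF : NiceCDF F) (x : ℝ) :
    Continuous (haux F x) := by
  unfold haux Rcurve
  exact continuous_id.min (((continuous_id.mul (continuous_const.sub hF.cont))).div_const _)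

lemma single_core {F : ℝ → ℝ} (hF : NiceCDF F)
    (hcon : StrictConcaveOn ℝ (Icc (0:ℝ) 1) (Rcurve F))
    {pstar : ℝ} (hps_mem : pstar ∈ Icc (0:ℝ) 1)
    (hps_max : IsMaxOn (Rcurve F) (Icc (0:ℝ) 1) pstar)
    (hps_uniq : ∀ q ∈ Icc (0:ℝ) 1, IsMaxOn (Rcurve F) (Icc (0:ℝ) 1) q → q = pstar)
    {x : ℝ} (hx : x ∈ Icc (0:ℝ) 1) (hx1 : F x < 1) :
    IsMaxOn (haux F x) (Icc (0:ℝ) 1) (max x pstar) ∧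
      ∀ q ∈ Icc (0:ℝ) 1, IsMaxOn (haux F x) (Icc (0:ℝ) 1) q → q = max x pstar := by
  set M := max x pstar with hM
  have hM0 : 0 ≤ M := le_trans hx.1 (le_max_left _ _)
  have hM1 : M ≤ 1 := max_le hx.2 hps_mem.2
  have hmono := haux_strictMonoOn hF hcon hps_mem hps_max hps_uniq hx hx1
  have hanti := haux_strictAntiOn hF hcon hps_mem hps_max hps_uniq hx hx1
  have hmax : IsMaxOn (haux F x) (Icc (0:ℝ) 1) M := by
    rw [isMaxOn_iff]
    intro p hp
    rcases le_total p M with h | h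
    · exact hmono.monotoneOn ⟨hp.1, h⟩ ⟨hM0, le_rfl⟩ h
    · exact hanti.antitoneOn ⟨le_rfl, hM1⟩ ⟨h, hp.2⟩ h
  refine ⟨hmax, fun q hq hqmax => ?_⟩
  rcases lt_trichotomy q M with h | h | h
  · have h1 : haux F x q < haux F x M := hmono ⟨hq.1, h.le⟩ ⟨hM0, le_rfl⟩ h
    have h2 : haux F x M ≤ haux F x q := isMaxOn_iff.1 hqmax M ⟨hM0, hM1⟩
    linarith
  · exact h
  · have h1 : haux F x M > haux F x q := hanti ⟨le_rfl, hM1⟩ ⟨h.le, hq.2⟩ h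
    have h2 : haux F x M ≤ haux F x q := isMaxOn_iff.1 hqmax M ⟨hM0, hM1⟩
    linarith

lemma mixed_core_aux {F : ℝ → ℝ} (hF : NiceCDF F)
    (hcon : StrictConcaveOn ℝ (Icc (0:ℝ) 1) (Rcurve F))
    {pstar : ℝ} (hps_mem : pstar ∈ Icc (0:ℝ) 1)
    (hps_max : IsMaxOn (Rcurve F) (Icc (0:ℝ) 1) pstar)
    (hps_uniq : ∀ q ∈ Icc (0:ℝ) 1, IsMaxOn (Rcurve F) (Icc (0:ℝ) 1) q → q = pstar)
    {x y w : ℝ} (hx : x ∈ Icc (0:ℝ) 1) (hy : y ∈ Icc (0:ℝ) 1) (hxy : x ≤ y)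
    (hx1 : F x < 1) (hy1 : F y < 1) (hw0 : 0 < w) (hw1 : w < 1) :
    ∃ a0 ∈ Icc (max x pstar) (max y pstar),
      IsMaxOn (fun p => w * haux F x p + (1 - w) * haux F y p) (Icc (0:ℝ) 1) a0 ∧
      ∀ q ∈ Icc (0:ℝ) 1,
        IsMaxOn (fun p => w * haux F x p + (1 - w) * haux F y p) (Icc (0:ℝ) 1) q → q = a0 := by
  set G : ℝ → ℝ := fun p => w * haux F x p + (1 - w) * haux F y p with hG
  set M0 := max x pstar with hM0def
  set M1 := max y pstar with hM1def
  have hM0M1 : M0 ≤ M1 := max_le_max hxy le_rfl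
  have hM00 : 0 ≤ M0 := le_trans hx.1 (le_max_left _ _)
  have hM01 : M0 ≤ 1 := max_le hx.2 hps_mem.2
  have hM10 : 0 ≤ M1 := le_trans hM00 hM0M1
  have hM11 : M1 ≤ 1 := max_le hy.2 hps_mem.2
  have hmonox := haux_strictMonoOn hF hcon hps_mem hps_max hps_uniq hx hx1
  have hmonoy := haux_strictMonoOn hF hcon hps_mem hps_max hps_uniq hy hy1
  have hantix := haux_strictAntiOn hF hcon hps_mem hps_max hps_uniq hx hx1
  have hantiy := haux_strictAntiOn hF hcon hps_mem hps_max hps_uniq hy hy1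
  have hGmono : StrictMonoOn G (Icc (0:ℝ) M0) := by
    intro a ha b hb hab
    have h1 : haux F x a < haux F x b := hmonox ⟨ha.1, ha.2⟩ ⟨hb.1, hb.2⟩ hab
    have h2 : haux F y a < haux F y b :=
      hmonoy ⟨ha.1, le_trans ha.2 hM0M1⟩ ⟨hb.1, le_trans hb.2 hM0M1⟩ hab
    simp only [hG]
    have := mul_lt_mul_of_pos_left h1 hw0
    have := mul_lt_mul_of_pos_left h2 (by linarith : (0:ℝ) < 1 - w)
    linarith
  have hGanti : StrictAntiOn G (Icc M1 1) := by
    intro a ha b hb hab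
    have h1 : haux F x b < haux F x a :=
      hantix ⟨le_trans hM0M1 ha.1, ha.2⟩ ⟨le_trans hM0M1 hb.1, hb.2⟩ hab
    have h2 : haux F y b < haux F y a := hantiy ⟨ha.1, ha.2⟩ ⟨hb.1, hb.2⟩ hab
    simp only [hG]
    have := mul_lt_mul_of_pos_left h1 hw0
    have := mul_lt_mul_of_pos_left h2 (by linarith : (0:ℝ) < 1 - w)
    linarith
  have hGcont : Continuous G :=
    (continuous_const.mul (haux_continuous hF x)).add
      (continuous_const.mul (haux_continuous hF y))
  obtain ⟨a0, ha0mem, ha0max⟩ :=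
    isCompact_Icc.exists_isMaxOn (nonempty_Icc.2 zero_le_one) hGcont.continuousOn
  have hrange : ∀ q ∈ Icc (0:ℝ) 1, IsMaxOn G (Icc (0:ℝ) 1) q → q ∈ Icc M0 M1 := by
    intro q hq hqmax
    constructor
    · by_contra hlt
      push_neg at hlt
      have h1 : G q < G M0 := hGmono ⟨hq.1, hlt.le⟩ ⟨hM00, le_rfl⟩ hlt
      have h2 : G M0 ≤ G q := isMaxOn_iff.1 hqmax M0 ⟨hM00, hM01⟩
      linarith
    · by_contra hlt
      push_neg at hlt
      have h1 : G q < G M1 := hGanti ⟨le_rfl, hM11⟩ ⟨hlt.le, hq.2⟩ hlt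
      have h2 : G M1 ≤ G q := isMaxOn_iff.1 hqmax M1 ⟨hM10, hM11⟩
      linarith
  have hconc : StrictConcaveOn ℝ (Icc x 1) G := by
    have hsx : StrictConcaveOn ℝ (Icc x 1) (fun p => w * haux F x p) :=
      strictConcaveOn_const_mul (haux_strictConcaveOn hF hcon hx hx1) hw0
    have hcy : ConcaveOn ℝ (Icc x 1) (fun p => (1 - w) * haux F y p) :=
      concaveOn_const_mul
        ((haux_concaveOn hF hcon hy1).subset (Icc_subset_Icc hx.1 le_rfl) (convex_Icc _ _))
        (by linarith)
    exact hsx.add_concaveOn hcy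
  have hsubx : Icc M0 M1 ⊆ Icc x 1 := Icc_subset_Icc (le_max_left _ _) hM11
  refine ⟨a0, hrange a0 ha0mem ha0max, ha0max, fun q hq hqmax => ?_⟩
  by_contra hne
  have hqI : q ∈ Icc x 1 := hsubx (hrange q hq hqmax)
  have ha0I : a0 ∈ Icc x 1 := hsubx (hrange a0 ha0mem ha0max)
  have hGeq : G q = G a0 :=
    le_antisymm (isMaxOn_iff.1 ha0max q hq) (isMaxOn_iff.1 hqmax a0 ha0mem)
  have hhalf : (0:ℝ) < 1/2 := by norm_num
  have key := hconc.2 hqI ha0I hne hhalf hhalf (by norm_num)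
  simp only [smul_eq_mul] at key
  rw [hGeq] at key
  have hzI : (1/2 : ℝ) * q + (1/2 : ℝ) * a0 ∈ Icc (0:ℝ) 1 := by
    constructor
    · have := hq.1; have := ha0mem.1; linarith
    · have := hq.2; have := ha0mem.2; linarith
  have hle : G ((1/2 : ℝ) * q + (1/2 : ℝ) * a0) ≤ G a0 := isMaxOn_iff.1 ha0max _ hzI
  linarith

lemma mixed_core {F : ℝ → ℝ} (hF : NiceCDF F)
    (hcon : StrictConcaveOn ℝ (Icc (0:ℝ) 1) (Rcurve F))
    {pstar : ℝ} (hps_mem : pstar ∈ Icc (0:ℝ) 1)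
    (hps_max : IsMaxOn (Rcurve F) (Icc (0:ℝ) 1) pstar)
    (hps_uniq : ∀ q ∈ Icc (0:ℝ) 1, IsMaxOn (Rcurve F) (Icc (0:ℝ) 1) q → q = pstar)
    {x y w : ℝ} (hx : x ∈ Icc (0:ℝ) 1) (hy : y ∈ Icc (0:ℝ) 1)
    (hx1 : F x < 1) (hy1 : F y < 1) (hw0 : 0 < w) (hw1 : w < 1) :
    ∃ a0 ∈ Icc (min (max x pstar) (max y pstar)) (max (max x pstar) (max y pstar)),
      IsMaxOn (fun p => w * haux F x p + (1 - w) * haux F y p) (Icc (0:ℝ) 1) a0 ∧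
      ∀ q ∈ Icc (0:ℝ) 1,
        IsMaxOn (fun p => w * haux F x p + (1 - w) * haux F y p) (Icc (0:ℝ) 1) q → q = a0 := by
  rcases le_total x y with hxy | hxy
  · obtain ⟨a0, hmem, hmax, huniq⟩ :=
      mixed_core_aux hF hcon hps_mem hps_max hps_uniq hx hy hxy hx1 hy1 hw0 hw1
    have hMM : max x pstar ≤ max y pstar := max_le_max hxy le_rfl
    rw [min_eq_left hMM, max_eq_right hMM]
    exact ⟨a0, hmem, hmax, huniq⟩
  · obtain ⟨a0, hmem, hmax, huniq⟩ :=
      mixed_core_aux hF hcon hps_mem hps_max hps_uniq hy hx hxy hy1 hx1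
        (by linarith : (0:ℝ) < 1 - w) (by linarith : 1 - w < 1)
    have hfun : (fun p => (1 - w) * haux F y p + (1 - (1 - w)) * haux F x p)
        = fun p => w * haux F x p + (1 - w) * haux F y p := by
      funext p; ring
    rw [hfun] at hmax huniq
    have hMM : max y pstar ≤ max x pstar := max_le_max hxy le_rfl
    rw [min_eq_right hMM, max_eq_left hMM]
    exact ⟨a0, hmem, hmax, huniq⟩

lemma isMaxOn_congr {f g : ℝ → ℝ} {s : Set ℝ} (h : EqOn f g s) {a : ℝ} (ha : a ∈ s) :
    IsMaxOn f s a ↔ IsMaxOn g s a := by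
  simp only [isMaxOn_iff]
  constructor <;> intro H x hx
  · rw [← h hx, ← h ha]; exact H x hx
  · rw [h hx, h ha]; exact H x hx

lemma racc_unique_max {F : ℝ → ℝ} (hF : NiceCDF F)
    (hcon : StrictConcaveOn ℝ (Icc (0:ℝ) 1) (Rcurve F))
    {pstar : ℝ} (hps_mem : pstar ∈ Icc (0:ℝ) 1)
    (hps_max : IsMaxOn (Rcurve F) (Icc (0:ℝ) 1) pstar)
    (hps_uniq : ∀ q ∈ Icc (0:ℝ) 1, IsMaxOn (Rcurve F) (Icc (0:ℝ) 1) q → q = pstar)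
    {μ p1 t : ℝ} (hμ : μ ∈ Icc (0:ℝ) 1) (hp1 : p1 ∈ Ioc (0:ℝ) 1) (ht : t ∈ Icc (0:ℝ) 1)
    (hden : 0 < μ * (1 - F t) + (1 - μ) * (1 - F p1)) :
    ∃ a0 ∈ Icc (min (max t pstar) (max p1 pstar)) (max (max t pstar) (max p1 pstar)),
      IsMaxOn (Racc F μ p1 t) (Icc (0:ℝ) 1) a0 ∧
      ∀ q ∈ Icc (0:ℝ) 1, IsMaxOn (Racc F μ p1 t) (Icc (0:ℝ) 1) q → q = a0 := by
  have hp1I : p1 ∈ Icc (0:ℝ) 1 := ⟨hp1.1.le, hp1.2⟩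
  have hFt1 : F t ≤ 1 := F_le_one hF ht
  have hFp11 : F p1 ≤ 1 := F_le_one hF hp1I
  have hnum1 : 0 ≤ μ * (1 - F t) := mul_nonneg hμ.1 (by linarith)
  have hnum2 : 0 ≤ (1 - μ) * (1 - F p1) := mul_nonneg (by have := hμ.2; linarith) (by linarith)
  have hexp : ∀ p : ℝ, Racc F μ p1 t p =
      muA F μ p1 t * (p * (1 - Fge F t p)) + (1 - muA F μ p1 t) * (p * (1 - Fge F p1 p)) := by
    intro p; unfold Racc FaccCDF; ring
  rcases eq_or_lt_of_le hnum1 with h1 | h1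
  · -- μ (1 - F t) = 0 : weight on the t-branch vanishes
    have hw : muA F μ p1 t = 0 := by unfold muA; rw [← h1]; simp
    have hnum2pos : 0 < (1 - μ) * (1 - F p1) := by rw [← h1] at hden; simpa using hden
    have hFp1 : F p1 < 1 := by
      by_contra hh; push_neg at hh
      have : (1 - μ) * (1 - F p1) ≤ 0 :=
        mul_nonpos_of_nonneg_of_nonpos (by have := hμ.2; linarith) (by linarith)
      linarith
    have hEq : EqOn (Racc F μ p1 t) (haux F p1) (Icc (0:ℝ) 1) := by
      intro p hp
      rw [hexp p, hw, ← haux_eq_Rge hF hp1I hFp1 hp.1]; ring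
    obtain ⟨hmax, huniq⟩ := single_core hF hcon hps_mem hps_max hps_uniq hp1I hFp1
    have hmem : max p1 pstar ∈ Icc (0:ℝ) 1 :=
      ⟨le_trans hp1I.1 (le_max_left _ _), max_le hp1I.2 hps_mem.2⟩
    refine ⟨max p1 pstar, ⟨min_le_right _ _, le_max_right _ _⟩,
      (isMaxOn_congr hEq hmem).2 hmax, fun q hq hqmax =>
        huniq q hq ((isMaxOn_congr hEq hq).1 hqmax)⟩
  · rcases eq_or_lt_of_le hnum2 with h2 | h2
    · -- (1-μ)(1 - F p1) = 0 : weight on the p1-branch vanishes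
      have hw : muA F μ p1 t = 1 := by
        unfold muA; rw [← h2, add_zero, div_self h1.ne']
      have hFt : F t < 1 := by
        by_contra hh; push_neg at hh
        have : μ * (1 - F t) ≤ 0 := mul_nonpos_of_nonneg_of_nonpos hμ.1 (by linarith)
        linarith
      have hEq : EqOn (Racc F μ p1 t) (haux F t) (Icc (0:ℝ) 1) := by
        intro p hp
        rw [hexp p, hw, ← haux_eq_Rge hF ht hFt hp.1]; ring
      obtain ⟨hmax, huniq⟩ := single_core hF hcon hps_mem hps_max hps_uniq ht hFt
      have hmem : max t pstar ∈ Icc (0:ℝ) 1 :=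
        ⟨le_trans ht.1 (le_max_left _ _), max_le ht.2 hps_mem.2⟩
      refine ⟨max t pstar, ⟨min_le_left _ _, le_max_left _ _⟩,
        (isMaxOn_congr hEq hmem).2 hmax, fun q hq hqmax =>
          huniq q hq ((isMaxOn_congr hEq hq).1 hqmax)⟩
    · -- mixed case
      have hw0 : 0 < muA F μ p1 t := div_pos h1 hden
      have hw1 : muA F μ p1 t < 1 := by
        unfold muA; rw [div_lt_one hden]; linarith
      have hFt : F t < 1 := by
        by_contra hh; push_neg at hh
        have : μ * (1 - F t) ≤ 0 := mul_nonpos_of_nonneg_of_nonpos hμ.1 (by linarith)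
        linarith
      have hFp1 : F p1 < 1 := by
        by_contra hh; push_neg at hh
        have : (1 - μ) * (1 - F p1) ≤ 0 :=
          mul_nonpos_of_nonneg_of_nonpos (by have := hμ.2; linarith) (by linarith)
        linarith
      have hEq : EqOn (Racc F μ p1 t)
          (fun p => muA F μ p1 t * haux F t p + (1 - muA F μ p1 t) * haux F p1 p)
          (Icc (0:ℝ) 1) := by
        intro p hp
        rw [hexp p, haux_eq_Rge hF ht hFt hp.1, haux_eq_Rge hF hp1I hFp1 hp.1]
      obtain ⟨a0, hmem, hmax, huniq⟩ :=
        mixed_core hF hcon hps_mem hps_max hps_uniq ht hp1I hFt hFp1 hw0 hw1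
      have hminI : min (max t pstar) (max p1 pstar) ≤ max t pstar := min_le_left _ _
      have ha0I : a0 ∈ Icc (0:ℝ) 1 := by
        constructor
        · refine le_trans ?_ hmem.1
          exact le_min (le_trans ht.1 (le_max_left _ _)) (le_trans hp1I.1 (le_max_left _ _))
        · refine le_trans hmem.2 ?_
          exact max_le (max_le ht.2 hps_mem.2) (max_le hp1I.2 hps_mem.2)
      exact ⟨a0, hmem, (isMaxOn_congr hEq ha0I).2 hmax, fun q hq hqmax =>
        huniq q hq ((isMaxOn_congr hEq hq).1 hqmax)⟩


lemma prob_dirac_of_compl_null {ν : Measure ℝ} (hν : IsProbabilityMeasure ν) {a : ℝ}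
    (h : ν {a}ᶜ = 0) : ν = Measure.dirac a := by
  ext s hs
  by_cases hmem : a ∈ s
  · have h1 : ν {a} = 1 := by
      have hcm := measure_add_measure_compl (μ := ν) (measurableSet_singleton a)
      rw [h, add_zero, measure_univ] at hcm
      exact hcm
    rw [Measure.dirac_apply_of_mem hmem]
    refine le_antisymm prob_le_one ?_
    rw [← h1]
    exact measure_mono (singleton_subset_iff.2 hmem)
  · have hsub : s ⊆ {a}ᶜ := by
      intro x hx
      simp only [mem_compl_iff, mem_singleton_iff]
      rintro rfl; exact hmem hx
    have hs0 : ν s = 0 := measure_mono_null hsub h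
    rw [hs0, Measure.dirac_apply' a hs, indicator_of_notMem hmem]

lemma mem_msupp_dirac (a : ℝ) : a ∈ msupp (Measure.dirac a) := by
  intro U hU
  rw [Measure.dirac_apply_of_mem (mem_of_mem_nhds hU)]
  exact one_ne_zero

/-- **Lemma: `p2A` is deterministic.** For any continuation
`(p1,p2R,p2A,t)`, the accept price `p2A` is deterministic (a point mass). If the
continuation is sophisticated-focused, then `p2A = max t p*`, where `p*` is the
unique maximizer of `R` on `[0,1]`. -/
theorem accept_price_deterministic
    (F : ℝ → ℝ) (hF : NiceCDF F)
    (hcon : StrictConcaveOn ℝ (Icc (0:ℝ) 1) (Rcurve F))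
    (pstar : ℝ) (hps_mem : pstar ∈ Icc (0:ℝ) 1)
    (hps_max : IsMaxOn (Rcurve F) (Icc (0:ℝ) 1) pstar)
    (hps_uniq : ∀ q ∈ Icc (0:ℝ) 1, IsMaxOn (Rcurve F) (Icc (0:ℝ) 1) q → q = pstar)
    (μ p1 t : ℝ) (p2R p2A : Measure ℝ)
    (hμ : μ ∈ Icc (0:ℝ) 1) (hp1 : p1 ∈ Ioc (0:ℝ) 1) (ht : t ∈ Icc (0:ℝ) 1)
    (hc : Continuation F μ p1 p2R p2A t) :
    (∃ a : ℝ, p2A = Measure.dirac a) ∧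
    (SophFocused p2A t → p2A = Measure.dirac (max t pstar)) := by
  obtain ⟨a0, ha0I, ha0max, ha0uniq⟩ :=
    racc_unique_max hF hcon hps_mem hps_max hps_uniq hμ hp1 ht hc.denA_pos
  have hset : msupp p2A ⊆ {a0} := fun p hp =>
    mem_singleton_iff.2 (ha0uniq p (hc.suppA01 hp) (hc.optA p hp))
  have hnull : p2A {a0}ᶜ = 0 := by
    refine measure_null_of_locally_null _ fun x hx => ?_
    have hxn : x ∉ msupp p2A := fun hmem => hx (hset hmem)
    simp only [msupp, mem_setOf_eq] at hxn
    push_neg at hxn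
    obtain ⟨U, hU, hU0⟩ := hxn
    exact ⟨U, nhdsWithin_le_nhds hU, hU0⟩
  have hdirac : p2A = Measure.dirac a0 := prob_dirac_of_compl_null hc.probA hnull
  refine ⟨⟨a0, hdirac⟩, ?_⟩
  rintro ⟨a, hda, hta⟩
  have hamem : a ∈ msupp p2A := by rw [hda]; exact mem_msupp_dirac a
  have haa0 : a = a0 := ha0uniq a (hc.suppA01 hamem) (hc.optA a hamem)
  have hintA : (∫ x, max (t - x) 0 ∂p2A) = 0 := by
    rw [hda, integral_dirac]
    exact max_eq_right (by linarith)
  have hR0 : 0 ≤ ∫ x, max (t - x) 0 ∂p2R :=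
    integral_nonneg fun x => le_max_right _ _
  have hp1t : p1 ≤ t := by
    have hind := hc.indiff
    rw [hintA] at hind
    linarith
  have hta0 : t ≤ a0 := haa0 ▸ hta
  have hMle : max p1 pstar ≤ max t pstar := max_le_max hp1t le_rfl
  rw [min_eq_right hMle, max_eq_left hMle] at ha0I
  have ha0eq : a0 = max t pstar := by
    rcases le_total pstar t with hcase | hcase
    · have hts : max t pstar = t := max_eq_left hcase
      rw [hts] at ha0I ⊢
      exact le_antisymm ha0I.2 hta0
    · have hps : max p1 pstar = pstar := max_eq_right (le_trans hp1t hcase)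
      have hts : max t pstar = pstar := max_eq_right hcase
      rw [hps] at ha0I
      rw [hts] at ha0I ⊢
      exact le_antisymm ha0I.2 ha0I.1
  rw [hdirac, ha0eq]


end RepeatedSales
end
end
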